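/- Let η ∈ D_r be a clean local configuration with k(η) ≥ 1 and suppose e^{2a(n)} = c n^{−d/k(η)} for a fixed constant c > 0, with b a fixed real. Then there exists a constant M_2 > 0 such that for all admissible n, c^{k(η)} e^{−2bγ(η)} (1 − M_2 e^{2a(n)}) ≤ E_{a(n),b}[X_n(η)] ≤ c^{k(η)} e^{−2bγ(η)}. -/

import Mathlib

open scoped ENNReal BigOperators
open Filter

namespace Ising

noncomputable section

/-- The `L_p` norm (`1 ≤ p ≤ ∞`) of an integer vector, via the `PiLp` norm on `ℝ^d`. -/
def lpNorm (p : ℝ≥0∞) [Fact (1 ≤ p)] {d : ℕ} (z : Fin d → ℤ) : ℝ :=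
  ‖(WithLp.equiv p (Fin d → ℝ)).symm (fun i => (z i : ℝ))‖

lemma lpNorm_neg (p : ℝ≥0∞) [Fact (1 ≤ p)] {d : ℕ} (z : Fin d → ℤ) :
    lpNorm p (fun i => -(z i)) = lpNorm p z := by
  unfold lpNorm
  have h : ((WithLp.equiv p (Fin d → ℝ)).symm (fun i => ((-(z i) : ℤ) : ℝ)))
      = -((WithLp.equiv p (Fin d → ℝ)).symm fun i => ((z i : ℤ) : ℝ)) := by
    have : (fun i => ((-(z i) : ℤ) : ℝ)) = -(fun i => ((z i : ℤ) : ℝ)) := by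
      funext i; simp
    rw [this]; rfl
  rw [h, norm_neg]

/-- Vertex set of the `d`-dimensional lattice torus of size `n`:
`{0, …, n-1}^d` with componentwise arithmetic modulo `n`. -/
abbrev Vtx (d n : ℕ) := Fin d → ZMod n

/-- Configurations: a spin (`true` = `+1`, `false` = `-1`) at each vertex. -/
abbrev Conf (d n : ℕ) := Vtx d n → Bool

/-- The spin value (`±1`) of a Boolean. -/
def spin (s : Bool) : ℝ := if s then 1 else -1

/-- The lattice torus `G_n`: distinct vertices `x, y` are adjacent iff `y - x`
(componentwise modulo `n`) admits an integer representative `z` with `‖z‖_p ≤ ρ`. -/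
def torus (d ρ : ℕ) (p : ℝ≥0∞) [Fact (1 ≤ p)] (n : ℕ) : SimpleGraph (Vtx d n) where
  Adj x y := x ≠ y ∧ ∃ z : Fin d → ℤ,
    (∀ i, ((z i : ZMod n) = y i - x i)) ∧ lpNorm p z ≤ (ρ : ℝ)
  symm := by
    constructor
    rintro x y ⟨hxy, z, hz, hn⟩
    refine ⟨hxy.symm, fun i => -(z i), fun i => ?_, by rw [lpNorm_neg]; exact hn⟩
    push_cast
    rw [hz i]; ring
  loopless := ⟨fun x h => h.1 rfl⟩

/-- The corresponding (infinite) lattice graph on `ℤ^d`, used as a reference to define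
local configurations: distinct `x, y` are adjacent iff `‖y - x‖_p ≤ ρ`. -/
def latticeZ (d ρ : ℕ) (p : ℝ≥0∞) [Fact (1 ≤ p)] : SimpleGraph (Fin d → ℤ) where
  Adj x y := x ≠ y ∧ lpNorm p (fun i => y i - x i) ≤ (ρ : ℝ)
  symm := by
    constructor
    rintro x y ⟨hxy, hn⟩
    refine ⟨hxy.symm, ?_⟩
    have h : (fun i => x i - y i) = (fun i => -(y i - x i)) := by funext i; ring
    rw [h, lpNorm_neg]; exact hn
  loopless := ⟨fun x h => h.1 rfl⟩

/-- The ball `B(x,r)` of center `x` and radius `r` for the graph distance. -/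
def gball {V : Type*} (G : SimpleGraph V) (x : V) (r : ℕ) : Set V :=
  {y | G.Reachable x y ∧ G.dist x y ≤ r}

/-- The reference ball `B(0,r)` (in `ℤ^d`). -/
def refBall (d ρ : ℕ) (p : ℝ≥0∞) [Fact (1 ≤ p)] (r : ℕ) : Set (Fin d → ℤ) :=
  gball (latticeZ d ρ p) 0 r

/-- A local configuration of radius `r`: an element of `D_r = {-1,+1}^{B(0,r)}`. -/
abbrev LocalConfig (d ρ : ℕ) (p : ℝ≥0∞) [Fact (1 ≤ p)] (r : ℕ) :=
  ↥(refBall d ρ p r) → Bool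

/-- `k(η)`: the number of positive vertices of a local configuration `η`. -/
def kOf (d ρ : ℕ) (p : ℝ≥0∞) [Fact (1 ≤ p)] (r : ℕ) (η : LocalConfig d ρ p r) : ℕ :=
  Set.ncard {v : ↥(refBall d ρ p r) | η v = true}

/-- The common degree of the vertices (number of neighbors of `0` in the lattice). -/
def degZ (d ρ : ℕ) (p : ℝ≥0∞) [Fact (1 ≤ p)] : ℕ :=
  Set.ncard {z : Fin d → ℤ | (latticeZ d ρ p).Adj 0 z}

/-- The perimeter `γ(η) = V·k(η) - 2·#{edges with both endpoints positive}`; the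
number of ordered adjacent pairs of positive vertices is twice the number of such edges. -/
def perim (d ρ : ℕ) (p : ℝ≥0∞) [Fact (1 ≤ p)] (r : ℕ) (η : LocalConfig d ρ p r) : ℕ :=
  degZ d ρ p * kOf d ρ p r η -
    Set.ncard {q : ↥(refBall d ρ p r) × ↥(refBall d ρ p r) |
      (latticeZ d ρ p).Adj q.1.1 q.2.1 ∧ η q.1 = true ∧ η q.2 = true}

/-- `η` is clean if every vertex at graph distance exactly `r` from `0` is negative. -/
def Clean (d ρ : ℕ) (p : ℝ≥0∞) [Fact (1 ≤ p)] (r : ℕ) (η : LocalConfig d ρ p r) : Prop :=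
  ∀ v : ↥(refBall d ρ p r), (latticeZ d ρ p).dist 0 v.1 = r → η v = false

/-- The translate `η_x` of `η` occurs at `x` in the configuration `σ`. -/
def occursAt (d ρ : ℕ) (p : ℝ≥0∞) [Fact (1 ≤ p)] (r n : ℕ) (η : LocalConfig d ρ p r)
    (x : Vtx d n) (σ : Conf d n) : Prop :=
  ∀ v : ↥(refBall d ρ p r), σ (x + fun i => ((v.1 i : ZMod n))) = η v

/-- The indicator `I_x^η` (as a real number). -/
def occInd (d ρ : ℕ) (p : ℝ≥0∞) [Fact (1 ≤ p)] (r n : ℕ) (η : LocalConfig d ρ p r)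
    (x : Vtx d n) (σ : Conf d n) : ℝ := by
  classical exact if occursAt d ρ p r n η x σ then 1 else 0

/-- `X_n(η) = Σ_x I_x^η`: the number of copies of `η` in `G_n`. -/
def Xcount (d ρ : ℕ) (p : ℝ≥0∞) [Fact (1 ≤ p)] (r n : ℕ) (η : LocalConfig d ρ p r)
    (σ : Conf d n) : ℕ :=
  Set.ncard {x : Vtx d n | occursAt d ρ p r n η x σ}

/-- The interaction term `Σ_{{x,y} ∈ E_n} σ(x)σ(y)`. -/
def pairSum (d ρ : ℕ) (p : ℝ≥0∞) [Fact (1 ≤ p)] (n : ℕ) (σ : Conf d n) : ℝ :=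
  ∑' e : ↥(torus d ρ p n).edgeSet,
    Sym2.lift ⟨fun x y => spin (σ x) * spin (σ y), fun _ _ => mul_comm _ _⟩
      (e : Sym2 (Vtx d n))

/-- The Hamiltonian `a Σ_x σ(x) + b Σ_{{x,y} ∈ E_n} σ(x)σ(y)`. -/
def hamiltonian (d ρ : ℕ) (p : ℝ≥0∞) [Fact (1 ≤ p)] (n : ℕ) (a b : ℝ) (σ : Conf d n) : ℝ :=
  a * (∑' x : Vtx d n, spin (σ x)) + b * pairSum d ρ p n σ

/-- The (unnormalized) Gibbs weight of a configuration. -/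
def weight (d ρ : ℕ) (p : ℝ≥0∞) [Fact (1 ≤ p)] (n : ℕ) (a b : ℝ) (σ : Conf d n) : ℝ :=
  Real.exp (hamiltonian d ρ p n a b σ)

/-- The partition function `Z_{a,b}`. -/
def partZ (d ρ : ℕ) (p : ℝ≥0∞) [Fact (1 ≤ p)] (n : ℕ) (a b : ℝ) : ℝ :=
  ∑' σ : Conf d n, weight d ρ p n a b σ

/-- The Ising (Gibbs) probability `μ_{a,b}(A)` of an event `A ⊆ X_n`. -/
def prob (d ρ : ℕ) (p : ℝ≥0∞) [Fact (1 ≤ p)] (n : ℕ) (a b : ℝ) (A : Set (Conf d n)) : ℝ :=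
  (∑' σ : ↥A, weight d ρ p n a b (σ : Conf d n)) / partZ d ρ p n a b

/-- The expectation `E_{a,b}[f]`. -/
def expect (d ρ : ℕ) (p : ℝ≥0∞) [Fact (1 ≤ p)] (n : ℕ) (a b : ℝ) (f : Conf d n → ℝ) : ℝ :=
  (∑' σ : Conf d n, weight d ρ p n a b σ * f σ) / partZ d ρ p n a b

/-- The variance `Var_{a,b}[f]`. -/
def varE (d ρ : ℕ) (p : ℝ≥0∞) [Fact (1 ≤ p)] (n : ℕ) (a b : ℝ) (f : Conf d n → ℝ) : ℝ :=
  expect d ρ p n a b (fun σ => (f σ - expect d ρ p n a b f) ^ 2)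

/-- The event `{I_x^η = 1}`. -/
def event (d ρ : ℕ) (p : ℝ≥0∞) [Fact (1 ≤ p)] (r n : ℕ) (η : LocalConfig d ρ p r)
    (x : Vtx d n) : Set (Conf d n) :=
  {σ | occursAt d ρ p r n η x σ}

/-- The event that a configuration agrees with `σ₀` on `W`. -/
def agreeOn (d n : ℕ) (W : Set (Vtx d n)) (σ₀ : Conf d n) : Set (Conf d n) :=
  {τ | ∀ x ∈ W, τ x = σ₀ x}

/-- The conditional probability `μ_{a,b}(A | σ₀ on W)`. -/
def condProb (d ρ : ℕ) (p : ℝ≥0∞) [Fact (1 ≤ p)] (n : ℕ) (a b : ℝ) (A : Set (Conf d n))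
    (W : Set (Vtx d n)) (σ₀ : Conf d n) : ℝ :=
  prob d ρ p n a b (A ∩ agreeOn d n W σ₀) / prob d ρ p n a b (agreeOn d n W σ₀)

/-- The exterior boundary `δV` of a set of vertices of the torus. -/
def boundary (d ρ : ℕ) (p : ℝ≥0∞) [Fact (1 ≤ p)] (n : ℕ) (V : Set (Vtx d n)) :
    Set (Vtx d n) :=
  {y | y ∉ V ∧ ∃ x ∈ V, (torus d ρ p n).Adj x y}

/-- The ball `B(x,R)` in the torus. -/
def tball (d ρ : ℕ) (p : ℝ≥0∞) [Fact (1 ≤ p)] (n : ℕ) (x : Vtx d n) (R : ℕ) :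
    Set (Vtx d n) :=
  gball (torus d ρ p n) x R

/-- The distribution (probability mass function on `ℕ`) of an integer-valued observable. -/
def lawOf (d ρ : ℕ) (p : ℝ≥0∞) [Fact (1 ≤ p)] (n : ℕ) (a b : ℝ) (X : Conf d n → ℕ) :
    ℕ → ℝ :=
  fun m => prob d ρ p n a b {σ | X σ = m}

/-- The distribution on `ℕ` of a real-valued (integer-valued in fact) observable. -/
def lawR (d ρ : ℕ) (p : ℝ≥0∞) [Fact (1 ≤ p)] (n : ℕ) (a b : ℝ) (X : Conf d n → ℝ) :
    ℕ → ℝ :=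
  fun m => prob d ρ p n a b {σ | X σ = (m : ℝ)}

/-- The Poisson distribution with parameter `θ`, as a pmf on `ℕ`. -/
def poissonPMF (θ : ℝ) : ℕ → ℝ :=
  fun m => Real.exp (-θ) * θ ^ m / (Nat.factorial m : ℝ)

/-- Total variation distance between two distributions on `ℕ`:
`d_TV(μ,ν) = sup_A |μ(A) - ν(A)|`. -/
def dTV (f g : ℕ → ℝ) : ℝ :=
  ⨆ A : Set ℕ, |(∑' m : ↥A, f (m : ℕ)) - ∑' m : ↥A, g (m : ℕ)|

/-- The clean extension `η̊ ∈ D_{r+1}` of `η ∈ D_r`: it agrees with `η` on `B(0,r)` and is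
negative at every vertex at distance exactly `r+1` from `0`. -/
def ringExt (d ρ : ℕ) (p : ℝ≥0∞) [Fact (1 ≤ p)] (r : ℕ) (η : LocalConfig d ρ p r) :
    LocalConfig d ρ p (r + 1) := by
  classical exact fun v => if h : v.1 ∈ refBall d ρ p r then η ⟨v.1, h⟩ else false

/-- `D_r(η) = {η' ∈ D_r : V_+(η') ⊇ V_+(η)}`. -/
def Dfam (d ρ : ℕ) (p : ℝ≥0∞) [Fact (1 ≤ p)] (r : ℕ) (η : LocalConfig d ρ p r) :
    Set (LocalConfig d ρ p r) :=
  {η' | ∀ v, η v = true → η' v = true}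

/-- `Ī_x^η = Σ_{η' ∈ D_r(η)} I_x^{η'}`. -/
def barInd (d ρ : ℕ) (p : ℝ≥0∞) [Fact (1 ≤ p)] (r n : ℕ) (η : LocalConfig d ρ p r)
    (x : Vtx d n) (σ : Conf d n) : ℝ :=
  ∑' η' : ↥(Dfam d ρ p r η), occInd d ρ p r n (η' : LocalConfig d ρ p r) x σ

/-- `X̄_n(η) = Σ_x Ī_x^η`. -/
def Xbar (d ρ : ℕ) (p : ℝ≥0∞) [Fact (1 ≤ p)] (r n : ℕ) (η : LocalConfig d ρ p r)
    (σ : Conf d n) : ℝ :=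
  ∑' x : Vtx d n, barInd d ρ p r n η x σ

/-- The closed neighbourhood `B̄ = B ∪ δB` of a torus ball. -/
def cball (d ρ : ℕ) (p : ℝ≥0∞) [Fact (1 ≤ p)] (n : ℕ) (x : Vtx d n) (r : ℕ) :
    Set (Vtx d n) :=
  tball d ρ p n x r ∪ boundary d ρ p n (tball d ρ p n x r)

/-- One step of the connectivity relation between the balls of radius `r` centered at the
entries of a tuple: `B̄(x_i) ∩ B(x_j) ≠ ∅`. -/
def stepRel (d ρ : ℕ) (p : ℝ≥0∞) [Fact (1 ≤ p)] (n r : ℕ) {l : ℕ} (x : Fin l → Vtx d n)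
    (i j : Fin l) : Prop :=
  (cball d ρ p n (x i) r ∩ tball d ρ p n (x j) r).Nonempty

/-- The number of equivalence classes, for the connectivity relation, of the set of balls
`{B(x_1,r), …, B(x_l,r)}`. -/
def numClasses (d ρ : ℕ) (p : ℝ≥0∞) [Fact (1 ≤ p)] (n r : ℕ) {l : ℕ}
    (x : Fin l → Vtx d n) : ℕ :=
  Set.ncard (Set.range fun i : Fin l =>
    {j : Fin l | Relation.EqvGen (stepRel d ρ p n r x) i j})

/-- `C_l(s)`: the set of `l`-tuples of vertices whose set of balls of radius `r` is composed
of exactly `s` equivalence classes for the connectivity relation. -/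
def tupleClass (d ρ : ℕ) (p : ℝ≥0∞) [Fact (1 ≤ p)] (n r l s : ℕ) :
    Set (Fin l → Vtx d n) :=
  {x | numClasses d ρ p n r x = s}


/-!
`E[X_n(η)] = ∑ₓ μ(I_x^η = 1)`. Since `η` is clean, flipping the positive vertices of `η_x` maps
the configurations that are all minus on `B(x, r)` bijectively onto those containing `η_x`, and
multiplies the Gibbs weight by exactly `e^{2a k(η) - 2b γ(η)}`: each flipped vertex adds `2a` to
the field term, and each of the `γ(η)` edges leaving `V_+(η_x)` ends at a minus vertex of the ball,
so its interaction drops by `2`. Hence `μ(I_x^η = 1) = e^{2ak - 2bγ} μ(σ ≡ -1 on B(x, r))`. The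
last probability is at most `1`, and at least `1 - |B(0, r)| e^{2|b|V} e^{2a}` by a union bound,
since flipping one minus spin multiplies the weight by at most `e^{2a + 2|b|V}`. Summing over the
`n^d` vertices and using `n^d e^{2ak} = c^k` gives both bounds with `M₂ = |B(0, r)| e^{2|b|V}`.
-/

open Finset

section Flip

theorem spin_not (t : Bool) : spin (!t) = -spin t := by
  cases t <;> simp [spin]

theorem abs_spin (t : Bool) : |spin t| = 1 := by
  cases t <;> norm_num [spin]

theorem spin_ne_zero (t : Bool) : spin t ≠ 0 := by
  cases t <;> norm_num [spin]

variable {V : Type*} [DecidableEq V]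

def flipOn (S : Finset V) (σ : V → Bool) : V → Bool :=
  fun x => if x ∈ S then !σ x else σ x

theorem flipOn_flipOn (S : Finset V) (σ : V → Bool) : flipOn S (flipOn S σ) = σ := by
  funext x
  unfold flipOn
  split_ifs <;> simp

theorem spin_flipOn (S : Finset V) (σ : V → Bool) (x : V) :
    spin (flipOn S σ x) = if x ∈ S then -spin (σ x) else spin (σ x) := by
  unfold flipOn
  split_ifs <;> simp [spin_not]

def edgeSpin (σ : V → Bool) : Sym2 V → ℝ :=
  Sym2.lift ⟨fun x y => spin (σ x) * spin (σ y), fun _ _ => mul_comm _ _⟩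

variable [Fintype V]

theorem sum_comp_flipOn {M : Type*} [AddCommMonoid M] (S : Finset V) (F : (V → Bool) → M) :
    ∑ σ, F (flipOn S σ) = ∑ σ, F σ :=
  Equiv.sum_comp (Function.Involutive.toPerm _ (flipOn_flipOn S)) F

theorem sum_spin_flipOn (S : Finset V) (σ : V → Bool) :
    ∑ x, spin (flipOn S σ x) = ∑ x, spin (σ x) - 2 * ∑ x ∈ S, spin (σ x) := by
  have h : ∀ x, spin (flipOn S σ x) = spin (σ x) - if x ∈ S then 2 * spin (σ x) else 0 := by
    intro x
    rw [spin_flipOn]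
    split_ifs <;> ring
  simp only [h, sum_sub_distrib, sum_ite_mem, univ_inter, mul_sum]

variable (G : SimpleGraph V) [DecidableRel G.Adj]

def boundaryPairs (S : Finset V) : Finset (V × V) :=
  (S ×ˢ Sᶜ).filter fun q => G.Adj q.1 q.2

theorem sum_edgeSpin_flipOn (S : Finset V) (σ : V → Bool) :
    ∑ e ∈ G.edgeFinset, edgeSpin (flipOn S σ) e
      = ∑ e ∈ G.edgeFinset, edgeSpin σ e
        - 2 * ∑ q ∈ boundaryPairs G S, spin (σ q.1) * spin (σ q.2) := by
  suffices h : ∑ q ∈ boundaryPairs G S, -2 * (spin (σ q.1) * spin (σ q.2))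
      = ∑ e ∈ G.edgeFinset, (edgeSpin (flipOn S σ) e - edgeSpin σ e) by
    rw [sum_sub_distrib, ← mul_sum] at h
    linarith
  refine Finset.sum_bij_ne_zero (fun q _ _ => s(q.1, q.2)) ?_ ?_ ?_ ?_
  · intro q hq _
    simp only [boundaryPairs, mem_filter] at hq
    exact G.mem_edgeFinset.mpr hq.2
  · rintro ⟨u, y⟩ hq _ ⟨u', y'⟩ hq' _ h
    simp only [boundaryPairs, mem_filter, mem_product, mem_compl] at hq hq'
    rcases Sym2.eq_iff.mp h with ⟨rfl, rfl⟩ | ⟨rfl, rfl⟩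
    · rfl
    · exact absurd hq.1.1 hq'.1.2
  · intro e he hne
    induction e using Sym2.ind with
    | _ x y =>
      have hxy : G.Adj x y := G.mem_edgeFinset.mp he
      simp only [edgeSpin, Sym2.lift_mk, spin_flipOn] at hne
      by_cases hx : x ∈ S <;> by_cases hy : y ∈ S
      · simp [hx, hy] at hne
      · exact ⟨(x, y), by simp [boundaryPairs, hx, hy, hxy], by simp [spin_ne_zero], rfl⟩
      · exact ⟨(y, x), by simp [boundaryPairs, hx, hy, hxy.symm], by simp [spin_ne_zero],
          Sym2.eq_swap⟩
      · simp [hx, hy] at hne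
  · rintro ⟨u, y⟩ hq _
    simp only [boundaryPairs, mem_filter, mem_product, mem_compl] at hq
    simp only [edgeSpin, Sym2.lift_mk, spin_flipOn, if_pos hq.1.1, if_neg hq.1.2]
    ring

theorem card_boundaryPairs_add (S : Finset V) :
    #(boundaryPairs G S) + #((S ×ˢ S).filter fun q => G.Adj q.1 q.2) = ∑ u ∈ S, G.degree u := by
  simp only [boundaryPairs, card_filter, sum_product, ← sum_add_distrib]
  refine sum_congr rfl fun u _ => ?_
  rw [sum_compl_add_sum, ← card_filter, ← G.card_neighborFinset_eq_degree,
    G.neighborFinset_eq_filter]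

end Flip

section Lattice

variable {d ρ : ℕ} {p : ℝ≥0∞} [Fact (1 ≤ p)]

theorem abs_le_of_lpNorm_le {z : Fin d → ℤ} (h : lpNorm p z ≤ ρ) (i : Fin d) :
    |z i| ≤ ρ := by
  have h' : |(z i : ℝ)| ≤ ρ := (PiLp.norm_apply_le _ i).trans h
  exact_mod_cast h'

theorem latticeZ_adj_add_iff (v z : Fin d → ℤ) :
    (latticeZ d ρ p).Adj v (v + z) ↔ (latticeZ d ρ p).Adj 0 z := by
  simp [latticeZ, eq_comm (a := (0 : Fin d → ℤ))]

theorem abs_sub_le_mul_length {v w : Fin d → ℤ} (q : (latticeZ d ρ p).Walk v w) (i : Fin d) :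
    |w i - v i| ≤ ρ * q.length := by
  induction q with
  | nil => simp
  | @cons u v w huv _ ih =>
    have huv_i : |v i - u i| ≤ ρ := abs_le_of_lpNorm_le huv.2 i
    rw [SimpleGraph.Walk.length_cons]
    push_cast
    linarith [abs_sub_le (w i) (v i) (u i)]

theorem abs_le_of_mem_refBall {r : ℕ} {v : Fin d → ℤ} (hv : v ∈ refBall d ρ p r) (i : Fin d) :
    |v i| ≤ ρ * r := by
  obtain ⟨q, hq⟩ := hv.1.exists_walk_length_eq_dist
  have := abs_sub_le_mul_length q i
  rw [hq] at this
  simpa using this.trans (mul_le_mul_of_nonneg_left (by exact_mod_cast hv.2) (by positivity))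

theorem finite_setOf_forall_abs_le (R : ℤ) : {v : Fin d → ℤ | ∀ i, |v i| ≤ R}.Finite :=
  (Set.Finite.pi fun _ => Set.finite_Icc (-R) R).subset fun _ hv i _ => abs_le.mp (hv i)

variable (d ρ p) in
theorem refBall_finite (r : ℕ) : (refBall d ρ p r).Finite :=
  (finite_setOf_forall_abs_le (ρ * r)).subset fun _ hv => abs_le_of_mem_refBall hv

theorem zero_mem_refBall (r : ℕ) : (0 : Fin d → ℤ) ∈ refBall d ρ p r :=
  ⟨SimpleGraph.Reachable.refl 0, by simp⟩

theorem mem_refBall_of_adj {r : ℕ} {η : LocalConfig d ρ p r} (hclean : Clean d ρ p r η)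
    {v : refBall d ρ p r} (hv : η v = true) {w : Fin d → ℤ} (hw : (latticeZ d ρ p).Adj v.1 w) :
    w ∈ refBall d ρ p r := by
  have hlt : (latticeZ d ρ p).dist 0 v.1 < r :=
    lt_of_le_of_ne v.2.2 fun h => by simp [hclean v h] at hv
  obtain ⟨q, hq⟩ := v.2.1.exists_walk_length_eq_dist
  refine ⟨v.2.1.trans hw.reachable, ?_⟩
  calc (latticeZ d ρ p).dist 0 w ≤ (q.concat hw).length := SimpleGraph.dist_le _
    _ = q.length + 1 := q.length_concat hw
    _ ≤ r := by omega

end Lattice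

section Torus

variable {d ρ : ℕ} {p : ℝ≥0∞} [Fact (1 ≤ p)] {n : ℕ}

def embed (x : Vtx d n) (v : Fin d → ℤ) : Vtx d n :=
  x + fun i => (v i : ZMod n)

theorem embed_zero (x : Vtx d n) : embed x 0 = x := by
  funext i
  simp [embed]

theorem embed_embed (x : Vtx d n) (v z : Fin d → ℤ) : embed (embed x v) z = embed x (v + z) := by
  funext i
  simp [embed, add_assoc]

theorem eq_of_intCast_eq_of_abs_sub_lt {a b : ℤ} (h : (a : ZMod n) = b) (hab : |a - b| < n) :
    a = b := by
  have hdvd := (ZMod.intCast_eq_intCast_iff_dvd_sub b a n).mp h.symm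
  linarith [Int.eq_zero_of_abs_lt_dvd hdvd hab]

theorem eq_of_embed_eq {x : Vtx d n} {v w : Fin d → ℤ} (h : embed x v = embed x w)
    (hvw : ∀ i, |v i - w i| < n) : v = w :=
  funext fun i => eq_of_intCast_eq_of_abs_sub_lt (by simpa [embed] using congrFun h i) (hvw i)

theorem exists_eq_embed_of_torus_adj {u y : Vtx d n} (h : (torus d ρ p n).Adj u y) :
    ∃ z, (latticeZ d ρ p).Adj 0 z ∧ y = embed u z := by
  obtain ⟨hne, z, hz, hnorm⟩ := h
  have hy : y = embed u z := funext fun i => by simp [embed, hz i]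
  refine ⟨z, ⟨fun h0 => hne ?_, by simpa using hnorm⟩, hy⟩
  rw [hy, ← h0, embed_zero]

theorem torus_adj_embed_iff {x : Vtx d n} {v w : Fin d → ℤ} (hvw : ∀ i, |w i - v i| + ρ < n) :
    (torus d ρ p n).Adj (embed x v) (embed x w) ↔ (latticeZ d ρ p).Adj v w := by
  constructor
  · rintro ⟨hne, z, hz, hnorm⟩
    have hzw : z = fun i => w i - v i := funext fun i =>
      eq_of_intCast_eq_of_abs_sub_lt (by rw [hz i]; simp [embed])
        (by linarith [abs_sub (z i) (w i - v i), abs_le_of_lpNorm_le hnorm i, hvw i])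
    exact ⟨fun h => hne (by rw [h]), hzw ▸ hnorm⟩
  · rintro ⟨hne, hnorm⟩
    refine ⟨fun h => hne (eq_of_embed_eq h fun i => ?_), fun i => w i - v i,
      fun i => by simp [embed], hnorm⟩
    rw [abs_sub_comm]
    linarith [hvw i]

open scoped Classical in
theorem torus_degree_eq [NeZero n] (hn : 2 * ρ < n) (u : Vtx d n) :
    (torus d ρ p n).degree u = degZ d ρ p := by
  have habs : ∀ {z : Fin d → ℤ}, (latticeZ d ρ p).Adj 0 z → ∀ i, |z i| ≤ ρ :=
    fun hz => abs_le_of_lpNorm_le (by simpa using hz.2)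
  have himage : (torus d ρ p n).neighborSet u = embed u '' {z | (latticeZ d ρ p).Adj 0 z} := by
    ext y
    constructor
    · intro hy
      obtain ⟨z, hz, rfl⟩ := exists_eq_embed_of_torus_adj hy
      exact ⟨z, hz, rfl⟩
    · rintro ⟨z, hz, rfl⟩
      have h := (torus_adj_embed_iff (p := p) (x := u) (v := 0) (w := z) fun i => by
        simp only [Pi.zero_apply, sub_zero]; linarith [habs hz i]).mpr hz
      rwa [embed_zero] at h
  have hinj : Set.InjOn (embed u) {z | (latticeZ d ρ p).Adj 0 z} := fun z hz z' hz' h =>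
    eq_of_embed_eq h fun i => by linarith [abs_sub (z i) (z' i), habs hz i, habs hz' i]
  rw [← SimpleGraph.card_neighborSet_eq_degree, ← Nat.card_eq_fintype_card, Nat.card_coe_set_eq,
    himage, hinj.ncard_image, degZ]

end Torus

section PositiveSet

variable {d ρ : ℕ} {p : ℝ≥0∞} [Fact (1 ≤ p)] {r n : ℕ}

instance (r : ℕ) : Fintype (refBall d ρ p r) := (refBall_finite d ρ p r).fintype

def posFinset (x : Vtx d n) (η : LocalConfig d ρ p r) : Finset (Vtx d n) :=
  (univ.filter fun v => η v = true).image fun v => embed x v.1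

theorem abs_sub_add_lt_of_mem_refBall (hn : 2 * ρ * (r + 1) < n) {v w : Fin d → ℤ}
    (hv : v ∈ refBall d ρ p r) (hw : w ∈ refBall d ρ p r) (i : Fin d) :
    |v i - w i| + ρ < n := by
  have hn' : (2 * ρ * (r + 1) : ℤ) < n := by exact_mod_cast hn
  have hρ : (0 : ℤ) ≤ ρ := by positivity
  linarith [abs_sub (v i) (w i), abs_le_of_mem_refBall hv i, abs_le_of_mem_refBall hw i]

theorem embed_injOn_refBall (hn : 2 * ρ * (r + 1) < n) (x : Vtx d n) :
    Set.InjOn (embed x) (refBall d ρ p r) := fun v hv w hw h =>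
  eq_of_embed_eq h fun i => by
    linarith [abs_sub_add_lt_of_mem_refBall hn hv hw i, (Nat.cast_nonneg ρ : (0 : ℤ) ≤ ρ)]

theorem embed_mem_posFinset_iff (hn : 2 * ρ * (r + 1) < n) (x : Vtx d n)
    {η : LocalConfig d ρ p r} (v : refBall d ρ p r) :
    embed x v.1 ∈ posFinset x η ↔ η v = true := by
  simp only [posFinset, mem_image, mem_filter, mem_univ, true_and]
  constructor
  · rintro ⟨w, hw, h⟩
    rwa [← Subtype.ext (embed_injOn_refBall hn x w.2 v.2 h)]
  · exact fun hv => ⟨v, hv, rfl⟩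

theorem card_posFinset (hn : 2 * ρ * (r + 1) < n) (x : Vtx d n) (η : LocalConfig d ρ p r) :
    #(posFinset x η) = kOf d ρ p r η := by
  rw [kOf, Set.ncard_eq_toFinset_card', Set.toFinset_ofPred, posFinset, card_image_of_injOn]
  exact fun v _ w _ h => Subtype.ext (embed_injOn_refBall hn x v.2 w.2 h)

open scoped Classical in
theorem card_filter_torus_adj_posFinset (hn : 2 * ρ * (r + 1) < n) (x : Vtx d n)
    (η : LocalConfig d ρ p r) :
    #((posFinset x η ×ˢ posFinset x η).filter fun q => (torus d ρ p n).Adj q.1 q.2)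
      = Set.ncard {q : refBall d ρ p r × refBall d ρ p r |
          (latticeZ d ρ p).Adj q.1.1 q.2.1 ∧ η q.1 = true ∧ η q.2 = true} := by
  rw [Set.ncard_eq_toFinset_card', Set.toFinset_ofPred]
  symm
  refine card_bij (fun q _ => (embed x q.1.1, embed x q.2.1)) ?_ ?_ ?_
  · rintro ⟨v, w⟩ hq
    simp only [mem_filter, mem_univ, true_and] at hq
    simp only [mem_filter, mem_product, embed_mem_posFinset_iff hn, hq.2.1, hq.2.2, true_and]
    exact (torus_adj_embed_iff (abs_sub_add_lt_of_mem_refBall hn w.2 v.2)).mpr hq.1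
  · rintro ⟨v, w⟩ _ ⟨v', w'⟩ _ h
    simp only [Prod.mk.injEq] at h
    rw [Subtype.ext (embed_injOn_refBall hn x v.2 v'.2 h.1),
      Subtype.ext (embed_injOn_refBall hn x w.2 w'.2 h.2)]
  · rintro ⟨a, b⟩ hab
    simp only [posFinset, mem_filter, mem_product, mem_image, mem_univ, true_and] at hab
    obtain ⟨⟨⟨v, hv, rfl⟩, ⟨w, hw, rfl⟩⟩, hadj⟩ := hab
    refine ⟨(v, w), ?_, rfl⟩
    simp only [mem_filter, mem_univ, true_and, hv, hw, and_true]
    exact (torus_adj_embed_iff (abs_sub_add_lt_of_mem_refBall hn w.2 v.2)).mp hadj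

open scoped Classical in
theorem card_boundaryPairs_posFinset [NeZero n] (hn : 2 * ρ * (r + 1) < n) (x : Vtx d n)
    (η : LocalConfig d ρ p r) :
    #(boundaryPairs (torus d ρ p n) (posFinset x η)) = perim d ρ p r η := by
  have hρn : 2 * ρ < n := lt_of_le_of_lt (by nlinarith) hn
  have h := card_boundaryPairs_add (torus d ρ p n) (posFinset x η)
  rw [card_filter_torus_adj_posFinset hn, sum_congr rfl fun u _ => torus_degree_eq hρn u,
    sum_const, card_posFinset hn, smul_eq_mul] at h
  rw [perim, mul_comm]
  omega

theorem occursAt_flipOn_posFinset_iff (hn : 2 * ρ * (r + 1) < n) (x : Vtx d n)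
    (η : LocalConfig d ρ p r) (σ : Conf d n) :
    occursAt d ρ p r n η x (flipOn (posFinset x η) σ)
      ↔ occursAt d ρ p r n (fun _ => false) x σ := by
  refine forall_congr' fun v => ?_
  change flipOn _ σ (embed x v.1) = η v ↔ σ (embed x v.1) = false
  simp only [flipOn, embed_mem_posFinset_iff hn]
  cases η v <;> simp

open scoped Classical in
theorem eq_false_of_mem_boundaryPairs [NeZero n] {η : LocalConfig d ρ p r}
    (hclean : Clean d ρ p r η) {x : Vtx d n} {σ : Conf d n}
    (hσ : occursAt d ρ p r n (fun _ => false) x σ)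
    {q : Vtx d n × Vtx d n} (hq : q ∈ boundaryPairs (torus d ρ p n) (posFinset x η)) :
    σ q.1 = false ∧ σ q.2 = false := by
  simp only [boundaryPairs, posFinset, mem_filter, mem_product, mem_image, mem_univ,
    true_and] at hq
  obtain ⟨⟨⟨v, hv, hq1⟩, -⟩, hadj⟩ := hq
  rw [← hq1] at hadj ⊢
  obtain ⟨z, hz, hq2⟩ := exists_eq_embed_of_torus_adj hadj
  rw [embed_embed] at hq2
  have hw := mem_refBall_of_adj hclean hv ((latticeZ_adj_add_iff v.1 z).mpr hz)
  exact ⟨hσ v, hq2 ▸ hσ ⟨_, hw⟩⟩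

end PositiveSet

section Gibbs

variable {d ρ : ℕ} {p : ℝ≥0∞} [Fact (1 ≤ p)] {r n : ℕ} [NeZero n]

open scoped Classical

theorem pairSum_eq_sum_edgeFinset (σ : Conf d n) :
    pairSum d ρ p n σ = ∑ e ∈ (torus d ρ p n).edgeFinset, edgeSpin σ e := by
  rw [pairSum, tsum_fintype]
  exact (sum_subtype _ (fun e => SimpleGraph.mem_edgeFinset) (edgeSpin σ)).symm

theorem hamiltonian_flipOn (a b : ℝ) (S : Finset (Vtx d n)) (σ : Conf d n) :
    hamiltonian d ρ p n a b (flipOn S σ)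
      = hamiltonian d ρ p n a b σ - 2 * a * ∑ x ∈ S, spin (σ x)
        - 2 * b * ∑ q ∈ boundaryPairs (torus d ρ p n) S, spin (σ q.1) * spin (σ q.2) := by
  simp only [hamiltonian, tsum_fintype, pairSum_eq_sum_edgeFinset, sum_spin_flipOn,
    sum_edgeSpin_flipOn]
  ring

theorem weight_flipOn_posFinset (hn : 2 * ρ * (r + 1) < n) {η : LocalConfig d ρ p r}
    (hclean : Clean d ρ p r η) (a b : ℝ) {x : Vtx d n} {σ : Conf d n}
    (hσ : occursAt d ρ p r n (fun _ => false) x σ) :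
    weight d ρ p n a b (flipOn (posFinset x η) σ)
      = Real.exp (2 * a * kOf d ρ p r η - 2 * b * perim d ρ p r η) * weight d ρ p n a b σ := by
  have hS : ∑ y ∈ posFinset x η, spin (σ y) = -kOf d ρ p r η := by
    rw [sum_congr rfl fun y hy => ?_, sum_const, card_posFinset hn, nsmul_eq_mul, mul_neg_one]
    obtain ⟨v, -, rfl⟩ := mem_image.mp hy
    rw [show σ (embed x v.1) = false from hσ v, spin]
    rfl
  have hB : ∑ q ∈ boundaryPairs (torus d ρ p n) (posFinset x η), spin (σ q.1) * spin (σ q.2)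
      = perim d ρ p r η := by
    rw [sum_congr rfl fun q hq => ?_, sum_const, card_boundaryPairs_posFinset hn, nsmul_eq_mul,
      mul_one]
    obtain ⟨h1, h2⟩ := eq_false_of_mem_boundaryPairs hclean hσ hq
    simp [h1, h2, spin]
  rw [weight, weight, ← Real.exp_add, hamiltonian_flipOn, hS, hB]
  ring_nf

theorem weight_flipOn_singleton_le (hn : 2 * ρ < n) (a b : ℝ) {σ : Conf d n} {u : Vtx d n}
    (hu : σ u = false) :
    weight d ρ p n a b (flipOn {u} σ)
      ≤ Real.exp (2 * a + 2 * |b| * degZ d ρ p) * weight d ρ p n a b σ := by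
  rw [weight, weight, ← Real.exp_add, Real.exp_le_exp, hamiltonian_flipOn, sum_singleton, hu,
    show spin false = -1 from rfl]
  set X := ∑ q ∈ boundaryPairs (torus d ρ p n) {u}, spin (σ q.1) * spin (σ q.2)
  have hX : |X| ≤ degZ d ρ p := by
    have hcard := card_boundaryPairs_add (torus d ρ p n) {u}
    rw [sum_singleton, torus_degree_eq hn] at hcard
    calc |X| ≤ ∑ q ∈ boundaryPairs (torus d ρ p n) {u}, |spin (σ q.1) * spin (σ q.2)| :=
          abs_sum_le_sum_abs _ _
      _ = #(boundaryPairs (torus d ρ p n) {u}) := by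
          simp only [abs_mul, abs_spin, mul_one, sum_const, nsmul_eq_mul]
      _ ≤ degZ d ρ p := by exact_mod_cast (by omega)
  have hbX : -(b * X) ≤ |b| * degZ d ρ p := (neg_le_abs _).trans <| by
    rw [abs_mul]
    exact mul_le_mul_of_nonneg_left hX (abs_nonneg b)
  linarith

theorem partZ_pos (a b : ℝ) : 0 < partZ d ρ p n a b := by
  rw [partZ, tsum_fintype]
  exact sum_pos (fun σ _ => Real.exp_pos _) univ_nonempty

theorem prob_eq_sum (a b : ℝ) (A : Set (Conf d n)) :
    prob d ρ p n a b A = (∑ σ, A.indicator (weight d ρ p n a b) σ) / partZ d ρ p n a b := by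
  rw [prob, _root_.tsum_subtype, tsum_fintype]

theorem prob_le_one (a b : ℝ) (A : Set (Conf d n)) : prob d ρ p n a b A ≤ 1 := by
  rw [prob_eq_sum, div_le_one (partZ_pos a b), partZ, tsum_fintype]
  exact sum_le_sum fun σ _ => Set.indicator_le_self' (fun _ _ => (Real.exp_pos _).le) σ

theorem one_le_prob_add_sum_prob {ι : Type*} (a b : ℝ) (A : Set (Conf d n)) (s : Finset ι)
    (B : ι → Set (Conf d n)) (h : ∀ σ ∉ A, ∃ i ∈ s, σ ∈ B i) :
    1 ≤ prob d ρ p n a b A + ∑ i ∈ s, prob d ρ p n a b (B i) := by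
  have hw : ∀ σ, 0 ≤ weight d ρ p n a b σ := fun σ => (Real.exp_pos _).le
  simp only [prob_eq_sum, ← sum_div, ← add_div]
  rw [le_div_iff₀ (partZ_pos a b), one_mul, partZ, tsum_fintype, sum_comm (s := s),
    ← sum_add_distrib]
  refine sum_le_sum fun σ _ => ?_
  by_cases hσ : σ ∈ A
  · rw [Set.indicator_of_mem hσ]
    exact le_add_of_nonneg_right (sum_nonneg fun i _ => Set.indicator_nonneg (fun σ _ => hw σ) σ)
  · obtain ⟨i, hi, hσi⟩ := h σ hσ
    rw [Set.indicator_of_notMem hσ, zero_add, ← Set.indicator_of_mem hσi (weight d ρ p n a b)]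
    exact single_le_sum (f := fun j => (B j).indicator _ σ)
      (fun j _ => Set.indicator_nonneg (fun σ _ => hw σ) σ) hi

end Gibbs

section Expectation

variable {d ρ : ℕ} {p : ℝ≥0∞} [Fact (1 ≤ p)] {r n : ℕ} [NeZero n]

theorem prob_event_eq (hn : 2 * ρ * (r + 1) < n) {η : LocalConfig d ρ p r}
    (hclean : Clean d ρ p r η) (x : Vtx d n) (a b : ℝ) :
    prob d ρ p n a b (event d ρ p r n η x)
      = Real.exp (2 * a * kOf d ρ p r η - 2 * b * perim d ρ p r η)
        * prob d ρ p n a b (event d ρ p r n (fun _ => false) x) := by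
  rw [prob_eq_sum, prob_eq_sum, mul_div_assoc', mul_sum,
    ← sum_comp_flipOn (posFinset x η) fun σ => (event d ρ p r n η x).indicator _ σ]
  congr 1
  refine sum_congr rfl fun σ _ => ?_
  have hiff := occursAt_flipOn_posFinset_iff hn x η σ
  by_cases hσ : occursAt d ρ p r n (fun _ => false) x σ
  · rw [Set.indicator_of_mem (hiff.mpr hσ), Set.indicator_of_mem hσ,
      weight_flipOn_posFinset hn hclean a b hσ]
  · rw [Set.indicator_of_notMem (mt hiff.mp hσ), Set.indicator_of_notMem hσ, mul_zero]

theorem prob_spin_true_le (hn : 2 * ρ < n) (a b : ℝ) (u : Vtx d n) :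
    prob d ρ p n a b {σ | σ u = true} ≤ Real.exp (2 * a + 2 * |b| * degZ d ρ p) := by
  rw [prob_eq_sum, div_le_iff₀ (partZ_pos a b), partZ, tsum_fintype, mul_sum,
    ← sum_comp_flipOn {u} fun σ => Set.indicator {σ | σ u = true} _ σ]
  refine sum_le_sum fun σ _ => ?_
  cases hu : σ u
  · rw [Set.indicator_of_mem (by simp [flipOn, hu])]
    exact weight_flipOn_singleton_le hn a b hu
  · rw [Set.indicator_of_notMem (by simp [flipOn, hu])]
    exact mul_nonneg (Real.exp_pos _).le (Real.exp_pos _).le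

theorem one_sub_le_prob_event_allMinus (hn : 2 * ρ * (r + 1) < n) (a b : ℝ) (x : Vtx d n) :
    1 - Fintype.card (refBall d ρ p r) * Real.exp (2 * |b| * degZ d ρ p) * Real.exp (2 * a)
      ≤ prob d ρ p n a b (event d ρ p r n (fun _ => false) x) := by
  have hρn : 2 * ρ < n := lt_of_le_of_lt (by nlinarith) hn
  have hunion := one_le_prob_add_sum_prob (ρ := ρ) (p := p) a b
    (event d ρ p r n (fun _ => false) x) univ
    (fun v : refBall d ρ p r => {σ | σ (embed x v.1) = true}) fun σ hσ => by
      simp only [event, occursAt, Set.mem_ofPred_eq, not_forall, Bool.not_eq_false] at hσ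
      obtain ⟨v, hv⟩ := hσ
      exact ⟨v, mem_univ v, hv⟩
  have hsum := sum_le_card_nsmul univ
    (fun v : refBall d ρ p r => prob d ρ p n a b {σ | σ (embed x v.1) = true}) _
    fun v _ => prob_spin_true_le hρn a b (embed x v.1)
  rw [card_univ, nsmul_eq_mul, Real.exp_add] at hsum
  linarith

theorem expect_Xcount_eq_sum_prob (η : LocalConfig d ρ p r) (a b : ℝ) :
    expect d ρ p n a b (fun σ => (Xcount d ρ p r n η σ : ℝ))
      = ∑ x, prob d ρ p n a b (event d ρ p r n η x) := by
  classical
  have hX : ∀ σ, (Xcount d ρ p r n η σ : ℝ) = ∑ x, (event d ρ p r n η x).indicator 1 σ := by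
    intro σ
    rw [Xcount, Set.ncard_eq_toFinset_card', Set.toFinset_ofPred, card_filter]
    push_cast
    rfl
  simp only [expect, tsum_fintype, prob_eq_sum, ← sum_div, hX, mul_sum]
  rw [sum_comm]
  congr 1
  refine sum_congr rfl fun x _ => sum_congr rfl fun σ _ => ?_
  simp only [← Set.indicator_mul_right, Pi.one_apply, mul_one]

end Expectation

theorem pow_mul_mul_rpow_neg_div_pow {x : ℝ} (hx : 0 < x) (c : ℝ) (d : ℕ) {k : ℕ}
    (hk : k ≠ 0) : x ^ d * (c * x ^ (-(d : ℝ) / k)) ^ k = c ^ k := by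
  rw [mul_pow, ← Real.rpow_natCast (x ^ _) k, ← Real.rpow_mul hx.le,
    div_mul_cancel₀ _ (by exact_mod_cast hk), Real.rpow_neg hx.le, Real.rpow_natCast]
  field_simp

theorem stmt_7_general
    (d ρ r : ℕ) (p : ℝ≥0∞) [Fact (1 ≤ p)]
    (η : LocalConfig d ρ p r) (hclean : Clean d ρ p r η) (hk : 1 ≤ kOf d ρ p r η)
    (c : ℝ) (b : ℝ) (a : ℕ → ℝ)
    (ha : ∀ n : ℕ, 0 < n →
      Real.exp (2 * a n) = c * (n : ℝ) ^ (-(d : ℝ) / (kOf d ρ p r η : ℝ))) :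
    ∃ M₂ : ℝ, 0 < M₂ ∧ ∀ n : ℕ, 2 * ρ * (r + 1) < n →
      c ^ kOf d ρ p r η * Real.exp (-2 * b * (perim d ρ p r η : ℝ))
          * (1 - M₂ * Real.exp (2 * a n))
        ≤ expect d ρ p n (a n) b (fun σ => (Xcount d ρ p r n η σ : ℝ)) ∧
      expect d ρ p n (a n) b (fun σ => (Xcount d ρ p r n η σ : ℝ))
        ≤ c ^ kOf d ρ p r η * Real.exp (-2 * b * (perim d ρ p r η : ℝ)) := by
  have hball : 0 < Fintype.card (refBall d ρ p r) :=
    Fintype.card_pos_iff.mpr ⟨⟨0, zero_mem_refBall r⟩⟩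
  refine ⟨Fintype.card (refBall d ρ p r) * Real.exp (2 * |b| * degZ d ρ p), by positivity,
    fun n hn => ?_⟩
  have hn0 : 0 < n := by omega
  have : NeZero n := ⟨hn0.ne'⟩
  set k := kOf d ρ p r η
  have hscale :
      (Fintype.card (Vtx d n) : ℝ) * Real.exp (2 * a n * k - 2 * b * perim d ρ p r η)
        = c ^ k * Real.exp (-2 * b * (perim d ρ p r η : ℝ)) := by
    have h := pow_mul_mul_rpow_neg_div_pow (Nat.cast_pos.mpr hn0) c d (k := k) (by omega)
    rw [← ha n hn0, ← Real.exp_nat_mul] at h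
    rw [Fintype.card_fun, ZMod.card, Fintype.card_fin, Nat.cast_pow, ← h,
      mul_assoc ((n : ℝ) ^ d), ← Real.exp_add]
    ring_nf
  set ε := Real.exp (2 * a n * k - 2 * b * perim d ρ p r η)
  have hE : expect d ρ p n (a n) b (fun σ => (Xcount d ρ p r n η σ : ℝ))
      = ε * ∑ x, prob d ρ p n (a n) b (event d ρ p r n (fun _ => false) x) := by
    rw [expect_Xcount_eq_sum_prob, mul_sum]
    exact sum_congr rfl fun x _ => prob_event_eq hn hclean x (a n) b
  rw [hE, ← hscale, mul_comm _ ε, mul_assoc]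
  constructor
  · have h := card_nsmul_le_sum univ _ _ fun x _ =>
      one_sub_le_prob_event_allMinus (d := d) (p := p) hn (a n) b x
    rw [card_univ, nsmul_eq_mul] at h
    exact mul_le_mul_of_nonneg_left h (Real.exp_pos _).le
  · have h := sum_le_card_nsmul univ _ _ fun x _ =>
      prob_le_one (ρ := ρ) (p := p) (a n) b (event d ρ p r n (fun _ => false) x)
    rw [card_univ, nsmul_eq_mul, mul_one] at h
    exact mul_le_mul_of_nonneg_left h (Real.exp_pos _).le

/-- **Lemma (two-sided expectation bound for clean configurations).**
If `η` is clean and `e^{2a(n)} = c n^{-d/k(η)}`, there is `M₂ > 0` such that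
`c^{k(η)} e^{-2bγ(η)} (1 - M₂ e^{2a(n)}) ≤ E_{a(n),b}[X_n(η)] ≤ c^{k(η)} e^{-2bγ(η)}`
for all admissible `n`. -/
theorem stmt_7
    (d ρ r : ℕ) (hd : 1 ≤ d) (hρ : 1 ≤ ρ) (p : ℝ≥0∞) [Fact (1 ≤ p)]
    (η : LocalConfig d ρ p r) (hclean : Clean d ρ p r η) (hk : 1 ≤ kOf d ρ p r η)
    (c : ℝ) (hc : 0 < c) (b : ℝ) (a : ℕ → ℝ)
    (ha : ∀ n : ℕ, 0 < n →
      Real.exp (2 * a n) = c * (n : ℝ) ^ (-(d : ℝ) / (kOf d ρ p r η : ℝ))) :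
    ∃ M₂ : ℝ, 0 < M₂ ∧ ∀ n : ℕ, 2 * ρ * (r + 1) < n →
      c ^ kOf d ρ p r η * Real.exp (-2 * b * (perim d ρ p r η : ℝ))
          * (1 - M₂ * Real.exp (2 * a n))
        ≤ expect d ρ p n (a n) b (fun σ => (Xcount d ρ p r n η σ : ℝ)) ∧
      expect d ρ p n (a n) b (fun σ => (Xcount d ρ p r n η σ : ℝ))
        ≤ c ^ kOf d ρ p r η * Real.exp (-2 * b * (perim d ρ p r η : ℝ)) :=
  stmt_7_general d ρ r p η hclean hk c b a ha

end

end Ising
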